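/- Let S be a Haydon space (totally disconnected compact space whose clopen algebra has SCP). Let (μₙ) be nonnegative monotone additive functions on the topology τ(S) with μₙ(S)=1, and (νₙ) nonnegative additive functions on the clopen algebra 𝒰(S), such that for each m, n and every ε > 0 there is a clopen set A with μₘ(A) < ε and νₙ(S∖A) < ε. Then there exists an infinite set Λ ⊆ ℕ such that for each n ∈ ℕ and each ε > 0 there is a clopen set P which satisfies νₙ(P) < ε and μₘ(S∖P) < ε for all m ∈ Λ. -/

import Mathlib

/-!
Fix `ν` and an infinite `M ⊆ ℕ`. Along a nonprincipal ultrafilter containing `M` the `μ m`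
converge on clopen sets to an additive `κ`. Take a `ν`-small clopen `V` whose `κ`-value is
almost maximal among `ν`-small clopens: then `κ U`, hence `μ m U` for ultrafilter-many `m`, is
small for every clopen `U` disjoint from `V` with `V ∪ U` still `ν`-small. This lets one choose
recursively `m₀ < m₁ < ⋯` in `M` and pairwise disjoint clopens `Bₖ`, keeping `V ∪ ⋃ Bₖ`
`ν`-small, such that `μ mₖ` is small off `V ∪ Bₖ`. Applying SCP to infinitely many disjoint
subsequences of `(Bₖ)` gives pairwise disjoint clopens `Dₜ`, each containing infinitely many
`Bₖ`; some `Dₜ` is `ν`-small, and `V ∪ Dₜ` separates `ν` from infinitely many `μ mₖ`.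
A diagonal argument over all `n` and all `ε = 1 / (i + 1)` produces `Λ`; the finitely many
indices of `Λ` outside each chosen subsequence are handled by a finite union of separating sets.
-/

open Filter Function Topology Set

lemma Set.Infinite.exists_ultrafilter_le_cofinite {α : Type*} {M : Set α} (hM : M.Infinite) :
    ∃ 𝒰 : Ultrafilter α, (𝒰 : Filter α) ≤ cofinite ∧ M ∈ 𝒰 := by
  obtain ⟨𝒰, h𝒰⟩ := @exists_ultrafilter_le _ _
    (frequently_iff_neBot.1 (frequently_cofinite_iff_infinite.2 hM))
  exact ⟨𝒰, h𝒰.trans inf_le_left, (h𝒰.trans inf_le_right) (mem_principal_self M)⟩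

lemma Ultrafilter.exists_tendsto_of_mem_Icc {ι : Type*} (𝒰 : Ultrafilter ι) {u : ι → ℝ}
    {a b : ℝ} (h : ∀ i, u i ∈ Icc a b) : ∃ L, Tendsto u 𝒰 (𝓝 L) := by
  obtain ⟨L, -, hL⟩ := isCompact_Icc.ultrafilter_le_nhds (𝒰.map u)
    (le_principal_iff.2 (Ultrafilter.mem_map.2 (univ_mem' h)))
  exact ⟨L, hL⟩

lemma exists_infinite_almost_subset (Q : ℕ → Set ℕ → Prop)
    (h : ∀ k M, M.Infinite → ∃ M' ⊆ M, M'.Infinite ∧ Q k M') :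
    ∃ Λ : Set ℕ, Λ.Infinite ∧ ∀ k, ∃ M, Q k M ∧ (Λ \ M).Finite := by
  choose! next hsub hinf hQ using h
  let M : ℕ → Set ℕ := fun k => Nat.rec univ (fun k M => next k M) k
  have hM : ∀ k, (M k).Infinite := by
    intro k
    induction k with
    | zero => exact infinite_univ
    | succ k ih => exact hinf k _ ih
  have hanti : Antitone M := antitone_nat_of_succ_le fun k => hsub k _ (hM k)
  choose g hgM hg using fun k => (hM k).exists_gt k
  refine ⟨range g, infinite_of_not_bddAbove fun ⟨b, hb⟩ => (hg b).not_ge (hb ⟨b, rfl⟩),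
    fun k => ⟨M (k + 1), hQ k _ (hM k), ((finite_Iio (k + 1)).image g).subset ?_⟩⟩
  rintro _ ⟨⟨j, rfl⟩, hj⟩
  exact ⟨j, lt_of_not_ge fun hkj => hj (hanti hkj (hgM j)), rfl⟩

lemma exists_strictMono_pairwise_disjoint {α : Type*} (p : Set α → Prop) (q : ℕ → Set α → Prop)
    (h₀ : p ∅) (h : ∀ N U, p U → ∃ m > N, ∃ B, Disjoint U B ∧ p (U ∪ B) ∧ q m B) :
    ∃ (m : ℕ → ℕ) (B : ℕ → Set α), StrictMono m ∧ Pairwise (Disjoint on B) ∧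
      ∀ k, q (m k) (B k) := by
  choose! next hnext nextSet hdisj hp hq using h
  let st : ℕ → ℕ × Set α := fun k =>
    Nat.rec (0, ∅) (fun _ s => (next s.1 s.2, s.2 ∪ nextSet s.1 s.2)) k
  have hst : ∀ k, p (st k).2 := by
    intro k
    induction k with
    | zero => exact h₀
    | succ k ih => exact hp _ _ ih
  have hmono : Monotone fun k => (st k).2 := monotone_nat_of_le_succ fun k => subset_union_left
  refine ⟨fun k => next (st k).1 (st k).2, fun k => nextSet (st k).1 (st k).2,
    strictMono_nat_of_lt_succ fun k => hnext _ _ (hst (k + 1)),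
    (pairwise_disjoint_on _).2 fun j k hjk => ?_, fun k => hq _ _ (hst k)⟩
  exact (hdisj _ _ (hst k)).mono_left (subset_union_right.trans (hmono hjk))

def HasSCP (S : Type*) [TopologicalSpace S] : Prop :=
  ∀ U : ℕ → Set S, (∀ n, IsClopen (U n)) → Pairwise (Disjoint on U) →
    ∃ M : Set ℕ, M.Infinite ∧ IsOpen (closure (⋃ m ∈ M, U m))

section

variable {S : Type*} [TopologicalSpace S]

structure IsClopenContent (f : Set S → ℝ) : Prop where
  nonneg : ∀ A, IsClopen A → 0 ≤ f A
  union : ∀ A B, IsClopen A → IsClopen B → Disjoint A B → f (A ∪ B) = f A + f B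

namespace IsClopenContent

variable {f : Set S → ℝ} {A B : Set S}

lemma empty (hf : IsClopenContent f) : f ∅ = 0 := by
  simpa using hf.union ∅ ∅ isClopen_empty isClopen_empty disjoint_bot_left

lemma mono (hf : IsClopenContent f) (hA : IsClopen A) (hB : IsClopen B) (hAB : A ⊆ B) :
    f A ≤ f B := by
  have h := hf.union A (B \ A) hA (hB.diff hA) disjoint_sdiff_right
  rw [union_sdiff_cancel hAB] at h
  linarith [hf.nonneg _ (hB.diff hA)]

lemma union_le (hf : IsClopenContent f) (hA : IsClopen A) (hB : IsClopen B) :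
    f (A ∪ B) ≤ f A + f B := by
  have h := hf.union A (B \ A) hA (hB.diff hA) disjoint_sdiff_right
  rw [union_sdiff_self] at h
  linarith [hf.mono (hB.diff hA) hB sdiff_subset]

lemma compl_union_sdiff_le (hf : IsClopenContent f) {C U V : Set S} (hV : IsClopen V)
    (hU : IsClopen U) (hC : IsClopen C) : f (V ∪ C \ (V ∪ U))ᶜ ≤ f Cᶜ + f U := by
  have hsub : (V ∪ C \ (V ∪ U))ᶜ ⊆ Cᶜ ∪ U := by
    intro x hx
    simp only [mem_compl_iff, mem_union, Set.mem_sdiff] at hx ⊢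
    tauto
  exact (hf.mono (hV.union (hC.diff (hV.union hU))).compl (hC.compl.union hU) hsub).trans
    (hf.union_le hC.compl hU)

lemma sum_range_le (hf : IsClopenContent f) {D : ℕ → Set S} (hD : ∀ t, IsClopen (D t))
    (hdisj : Pairwise (Disjoint on D)) (T : ℕ) :
    ∑ t ∈ Finset.range T, f (D t) ≤ f univ := by
  have hclopen : ∀ T, IsClopen (⋃ t ∈ Finset.range T, D t) :=
    fun T => isClopen_biUnion_finset fun t _ => hD t
  have hsum : f (⋃ t ∈ Finset.range T, D t) = ∑ t ∈ Finset.range T, f (D t) := by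
    induction T with
    | zero => simp [hf.empty]
    | succ T ih =>
      have hdisjT : Disjoint (⋃ t ∈ Finset.range T, D t) (D T) :=
        disjoint_iUnion₂_left.2 fun t ht => hdisj (Finset.mem_range.1 ht).ne
      rw [Finset.range_add_one, Finset.set_biUnion_insert, union_comm,
        hf.union _ _ (hclopen T) (hD T) hdisjT, ih, Finset.sum_insert Finset.notMem_range_self,
        add_comm]
  exact hsum ▸ hf.mono (hclopen T) isClopen_univ (subset_univ _)

lemma exists_lt_of_pairwise_disjoint (hf : IsClopenContent f) {D : ℕ → Set S}
    (hD : ∀ t, IsClopen (D t)) (hdisj : Pairwise (Disjoint on D)) {ε : ℝ} (hε : 0 < ε) :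
    ∃ t, f (D t) < ε :=
  ((summable_of_sum_range_le (fun t => hf.nonneg _ (hD t))
    (hf.sum_range_le hD hdisj)).tendsto_atTop_zero.eventually_lt_const hε).exists

end IsClopenContent

/-- In the paper's terms: `P` `ε`-separates `ν` and each `μ m` with `m ∈ M`. -/
def EpsSeparates (ε : ℝ) (ν : Set S → ℝ) (μ : ℕ → Set S → ℝ) (M : Set ℕ) (P : Set S) : Prop :=
  IsClopen P ∧ ν P < ε ∧ ∀ m ∈ M, μ m Pᶜ < ε

def ClopenSeparated (ν : Set S → ℝ) (μ : ℕ → Set S → ℝ) (M : Set ℕ) : Prop :=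
  ∀ ε > 0, ∃ P, EpsSeparates ε ν μ M P

variable {ν : Set S → ℝ} {μ : ℕ → Set S → ℝ}

lemma EpsSeparates.mono {ε ε' : ℝ} {M N : Set ℕ} {P : Set S} (h : EpsSeparates ε ν μ M P)
    (hε : ε ≤ ε') (hNM : N ⊆ M) : EpsSeparates ε' ν μ N P :=
  ⟨h.1, h.2.1.trans_le hε, fun m hm => (h.2.2 m (hNM hm)).trans_le hε⟩

lemma EpsSeparates.union (hν : IsClopenContent ν) (hμ : ∀ m, IsClopenContent (μ m))
    {ε ε' : ℝ} {M N : Set ℕ} {P Q : Set S} (hP : EpsSeparates ε ν μ M P)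
    (hQ : EpsSeparates ε' ν μ N Q) : EpsSeparates (ε + ε') ν μ (M ∪ N) (P ∪ Q) := by
  obtain ⟨hPc, hνP, hμP⟩ := hP
  obtain ⟨hQc, hνQ, hμQ⟩ := hQ
  have hε : 0 < ε := (hν.nonneg P hPc).trans_lt hνP
  have hε' : 0 < ε' := (hν.nonneg Q hQc).trans_lt hνQ
  refine ⟨hPc.union hQc, (hν.union_le hPc hQc).trans_lt (add_lt_add hνP hνQ), ?_⟩
  rintro m (hm | hm)
  · calc μ m (P ∪ Q)ᶜ ≤ μ m Pᶜ :=
          (hμ m).mono (hPc.union hQc).compl hPc.compl (compl_subset_compl.2 subset_union_left)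
      _ < ε + ε' := by linarith [hμP m hm]
  · calc μ m (P ∪ Q)ᶜ ≤ μ m Qᶜ :=
          (hμ m).mono (hPc.union hQc).compl hQc.compl (compl_subset_compl.2 subset_union_right)
      _ < ε + ε' := by linarith [hμQ m hm]

lemma ClopenSeparated.of_finite (hν : IsClopenContent ν) (hμ : ∀ m, IsClopenContent (μ m))
    (hsep : ∀ m, ClopenSeparated ν μ {m}) {F : Set ℕ} (hF : F.Finite) :
    ClopenSeparated ν μ F := by
  induction F, hF using Set.Finite.induction_on with
  | empty => exact fun ε hε => ⟨∅, isClopen_empty, by rwa [hν.empty], by simp⟩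
  | @insert a F _ _ ih =>
    intro ε hε
    obtain ⟨P, hP⟩ := hsep a (ε / 2) (half_pos hε)
    obtain ⟨Q, hQ⟩ := ih (ε / 2) (half_pos hε)
    rw [insert_eq]
    exact ⟨P ∪ Q, add_halves ε ▸ hP.union hν hμ hQ⟩

lemma exists_clopen_almost_maximal (κ : Set S → ℝ)
    (hκ_add : ∀ A B, IsClopen A → IsClopen B → Disjoint A B → κ (A ∪ B) = κ A + κ B)
    (hκ_bdd : BddAbove (κ '' {A | IsClopen A})) (hν : IsClopenContent ν) {η ρ : ℝ}
    (hη : 0 < η) (hρ : 0 < ρ) :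
    ∃ V, IsClopen V ∧ ν V < η ∧
      ∀ U, IsClopen U → Disjoint V U → ν (V ∪ U) < η → κ U < ρ := by
  set small := {V : Set S | IsClopen V ∧ ν V < η}
  have hne : (κ '' small).Nonempty := ⟨_, mem_image_of_mem κ ⟨isClopen_empty, hν.empty ▸ hη⟩⟩
  have hbdd : BddAbove (κ '' small) := hκ_bdd.mono (image_mono fun V hV => hV.1)
  obtain ⟨_, ⟨V, ⟨hV, hνV⟩, rfl⟩, hVsup⟩ := exists_lt_of_lt_csSup hne (sub_lt_self _ hρ)
  refine ⟨V, hV, hνV, fun U hU hVU hνVU => ?_⟩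
  have h := le_csSup hbdd (mem_image_of_mem κ ⟨hV.union hU, hνVU⟩)
  rw [hκ_add V U hV hU hVU] at h
  linarith

lemma exists_clopen_eventually_lt (𝒰 : Ultrafilter ℕ) (hν : IsClopenContent ν)
    (hμ : ∀ m, IsClopenContent (μ m)) (hμ_le : ∀ m, μ m univ ≤ 1) {η ρ : ℝ} (hη : 0 < η)
    (hρ : 0 < ρ) :
    ∃ V, IsClopen V ∧ ν V < η ∧
      ∀ U, IsClopen U → Disjoint V U → ν (V ∪ U) < η → ∀ᶠ m in 𝒰, μ m U < ρ := by
  have hμ_mem : ∀ m X, IsClopen X → μ m X ∈ Icc 0 1 := fun m X hX =>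
    ⟨(hμ m).nonneg X hX, ((hμ m).mono hX isClopen_univ (subset_univ X)).trans (hμ_le m)⟩
  set κ : Set S → ℝ := fun X => limUnder (𝒰 : Filter ℕ) fun m => μ m X
  have hκ : ∀ X, IsClopen X → Tendsto (fun m => μ m X) 𝒰 (𝓝 (κ X)) := fun X hX =>
    tendsto_nhds_limUnder (𝒰.exists_tendsto_of_mem_Icc fun m => hμ_mem m X hX)
  have hκ_add : ∀ A B, IsClopen A → IsClopen B → Disjoint A B → κ (A ∪ B) = κ A + κ B :=
    fun A B hA hB hAB => tendsto_nhds_unique (hκ _ (hA.union hB))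
      (((hκ A hA).add (hκ B hB)).congr fun m => ((hμ m).union A B hA hB hAB).symm)
  have hκ_bdd : BddAbove (κ '' {A | IsClopen A}) := by
    refine ⟨1, ?_⟩
    rintro _ ⟨A, hA, rfl⟩
    exact le_of_tendsto' (hκ A hA) fun m => (hμ_mem m A hA).2
  obtain ⟨V, hV, hνV, hVmax⟩ := exists_clopen_almost_maximal κ hκ_add hκ_bdd hν hη hρ
  exact ⟨V, hV, hνV, fun U hU hVU hνVU =>
    (hκ U hU).eventually_lt_const (hVmax U hU hVU hνVU)⟩

lemma HasSCP.exists_clopen_cover (hS : HasSCP S) {B : ℕ → Set S} (hB : ∀ n, IsClopen (B n))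
    (hdisj : Pairwise (Disjoint on B)) :
    ∃ (J : ℕ → Set ℕ) (D : ℕ → Set S), (∀ t, (J t).Infinite) ∧ (∀ t, IsClopen (D t)) ∧
      Pairwise (Disjoint on D) ∧ ∀ t, ∀ j ∈ J t, B j ⊆ D t := by
  have hrow : ∀ t, Pairwise (Disjoint on fun j => B (Nat.pair t j)) :=
    fun t i j hij => hdisj fun h => hij (Nat.pair_eq_pair.1 h).2
  choose M hM hopen using fun t => hS _ (fun j => hB _) (hrow t)
  set G : ℕ → Set S := fun t => closure (⋃ j ∈ M t, B (Nat.pair t j))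
  have hG : ∀ t, IsClopen (G t) := fun t => ⟨isClosed_closure, hopen t⟩
  have hBG : ∀ s t j, s ≠ t → Disjoint (B (Nat.pair t j)) (G s) := by
    refine fun s t j hst =>
      subset_compl_iff_disjoint_left.1 (closure_minimal ?_ (hB _).compl.isClosed)
    exact iUnion₂_subset fun i _ =>
      subset_compl_iff_disjoint_left.2 (hdisj fun h => hst (Nat.pair_eq_pair.1 h).1.symm)
  refine ⟨fun t => Nat.pair t '' M t, disjointed G,
    fun t => (hM t).image fun _ _ _ _ h => (Nat.pair_eq_pair.1 h).2,
    fun t => disjointedRec (fun _ i h => h.diff (hG i)) (hG t), disjoint_disjointed G, ?_⟩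
  rintro t _ ⟨j, hj, rfl⟩
  rw [disjointed_eq_inter_compl]
  refine subset_inter ((subset_biUnion_of_mem (u := fun j => B (Nat.pair t j)) hj).trans
    subset_closure) (subset_iInter₂ fun s hs => ?_)
  exact subset_compl_iff_disjoint_right.2 (hBG s t j hs.ne)

theorem exists_infinite_subset_epsSeparates (hS : HasSCP S) (hν : IsClopenContent ν)
    (hμ : ∀ m, IsClopenContent (μ m)) (hμ_le : ∀ m, μ m univ ≤ 1)
    (hsep : ∀ m, ClopenSeparated ν μ {m}) {M : Set ℕ} (hM : M.Infinite) {δ : ℝ} (hδ : 0 < δ) :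
    ∃ M' ⊆ M, M'.Infinite ∧ ∃ P, EpsSeparates δ ν μ M' P := by
  obtain ⟨𝒰, h𝒰, hM𝒰⟩ := hM.exists_ultrafilter_le_cofinite
  have h𝒰N : ∀ N, ∀ᶠ k in (𝒰 : Filter ℕ), N < k := fun N =>
    h𝒰 (Nat.cofinite_eq_atTop ▸ eventually_gt_atTop N)
  obtain ⟨V, hV, hνV, hVmax⟩ := exists_clopen_eventually_lt 𝒰 hν hμ hμ_le (half_pos hδ)
    (half_pos hδ)
  obtain ⟨m, B, hm, hBdisj, hgood⟩ := exists_strictMono_pairwise_disjoint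
    (fun U => IsClopen U ∧ Disjoint V U ∧ ν (V ∪ U) < δ / 2)
    (fun k B => k ∈ M ∧ IsClopen B ∧ μ k (V ∪ B)ᶜ < δ)
    ⟨isClopen_empty, disjoint_empty V, by rwa [union_empty]⟩ fun N U ⟨hU, hVU, hνVU⟩ => by
      obtain ⟨k, hkN, hkU, hkM⟩ := ((h𝒰N N).and ((hVmax U hU hVU hνVU).and hM𝒰)).exists
      obtain ⟨C, hC, hνC, hμC⟩ := hsep k _ (sub_pos.2 hνVU)
      have hVU' := hV.union hU
      refine ⟨k, hkN, C \ (V ∪ U), disjoint_sdiff_right.mono_left subset_union_right,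
        ⟨hU.union (hC.diff hVU'), ?_, ?_⟩, hkM, hC.diff hVU', ?_⟩
      · exact disjoint_union_right.2 ⟨hVU, disjoint_sdiff_right.mono_left subset_union_left⟩
      · calc ν (V ∪ (U ∪ C \ (V ∪ U))) = ν (V ∪ U ∪ C) := by
              rw [← union_assoc, union_sdiff_self]
          _ ≤ ν (V ∪ U) + ν C := hν.union_le hVU' hC
          _ < δ / 2 := by linarith
      · linarith [(hμ k).compl_union_sdiff_le hV hU hC, hμC k rfl, hν.nonneg _ hVU']
  choose hmM hB hμB using hgood
  obtain ⟨J, D, hJ, hD, hDdisj, hBD⟩ := hS.exists_clopen_cover hB hBdisj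
  obtain ⟨t, ht⟩ := hν.exists_lt_of_pairwise_disjoint hD hDdisj (half_pos hδ)
  refine ⟨m '' J t, image_subset_iff.2 fun j _ => hmM j, (hJ t).image hm.injective.injOn,
    V ∪ D t, hV.union (hD t), ?_, ?_⟩
  · linarith [hν.union_le hV (hD t)]
  · rintro _ ⟨j, hj, rfl⟩
    refine lt_of_le_of_lt ((hμ _).mono (hV.union (hD t)).compl (hV.union (hB j)).compl ?_) (hμB j)
    exact compl_subset_compl.2 (union_subset_union_right V (hBD t j hj))

end

theorem stmt11_general {S : Type*} [TopologicalSpace S]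
    (hSCP : ∀ U : ℕ → Set S, (∀ n, IsClopen (U n)) →
      Pairwise (Function.onFun Disjoint U) →
      ∃ M : Set ℕ, M.Infinite ∧ IsOpen (closure (⋃ m ∈ M, U m)))
    (μ ν : ℕ → Set S → ℝ)
    (hμ_nonneg : ∀ n A, IsOpen A → 0 ≤ μ n A)
    (hμ_add : ∀ n (A B : Set S), IsOpen A → IsOpen B → Disjoint A B →
      μ n (A ∪ B) = μ n A + μ n B)
    (hμ_one : ∀ n, μ n Set.univ = 1)
    (hν_nonneg : ∀ n A, IsClopen A → 0 ≤ ν n A)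
    (hν_add : ∀ n (A B : Set S), IsClopen A → IsClopen B → Disjoint A B →
      ν n (A ∪ B) = ν n A + ν n B)
    (hsep : ∀ m n, ∀ ε > (0 : ℝ), ∃ A : Set S, IsClopen A ∧
      μ m A < ε ∧ ν n Aᶜ < ε) :
    ∃ Λ : Set ℕ, Λ.Infinite ∧ ∀ n, ∀ ε > (0 : ℝ), ∃ P : Set S, IsClopen P ∧
      ν n P < ε ∧ ∀ m ∈ Λ, μ m Pᶜ < ε := by
  have hν : ∀ n, IsClopenContent (ν n) := fun n => ⟨hν_nonneg n, hν_add n⟩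
  have hμ : ∀ m, IsClopenContent (μ m) := fun m =>
    ⟨fun A hA => hμ_nonneg m A hA.isOpen, fun A B hA hB => hμ_add m A B hA.isOpen hB.isOpen⟩
  have hsep' : ∀ n m, ClopenSeparated (ν n) μ {m} := fun n m ε hε =>
    let ⟨A, hA, hμA, hνA⟩ := hsep m n ε hε
    ⟨Aᶜ, hA.compl, hνA, by simpa using hμA⟩
  -- the index `k` encodes the pair `(n, i)`: separate `ν n` to precision `1 / (i + 1)`
  obtain ⟨Λ, hΛ, hΛM⟩ := exists_infinite_almost_subset
    (fun k M => ∃ P, EpsSeparates (1 / (k.unpair.2 + 1)) (ν k.unpair.1) μ M P)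
    fun k M hM => exists_infinite_subset_epsSeparates hSCP (hν _) hμ (fun m => (hμ_one m).le)
      (hsep' _) hM Nat.one_div_pos_of_nat
  refine ⟨Λ, hΛ, fun n ε hε => ?_⟩
  obtain ⟨i, hi⟩ := exists_nat_one_div_lt (half_pos hε)
  obtain ⟨M, ⟨P, hP⟩, hfin⟩ := hΛM (Nat.pair n i)
  rw [Nat.unpair_pair] at hP
  obtain ⟨Q, hQ⟩ := ClopenSeparated.of_finite (hν n) hμ (hsep' n) hfin (ε / 2) (half_pos hε)
  exact ⟨P ∪ Q, (hP.union (hν n) hμ hQ).mono (by linarith)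
    (subset_union_right.trans union_sdiff_self.superset)⟩

/-- Inductive lemma: S a Haydon space, (μₙ) nonnegative monotone additive functions on the
topology with μₙ(S) = 1, (νₙ) nonnegative additive functions on the clopen algebra, such
that each pair μₘ, νₙ is 𝒰(S)-separated.  Then there is an infinite Λ ⊆ ℕ such that for
each n and each ε > 0 some clopen P has νₙ(P) < ε and μₘ(S∖P) < ε for all m ∈ Λ. -/
theorem stmt11 {S : Type*} [TopologicalSpace S] [CompactSpace S] [T2Space S]
    [TotallyDisconnectedSpace S]
    (hSCP : ∀ U : ℕ → Set S, (∀ n, IsClopen (U n)) →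
      Pairwise (Function.onFun Disjoint U) →
      ∃ M : Set ℕ, M.Infinite ∧ IsOpen (closure (⋃ m ∈ M, U m)))
    (μ ν : ℕ → Set S → ℝ)
    (hμ_nonneg : ∀ n A, IsOpen A → 0 ≤ μ n A)
    (hμ_mono : ∀ n (A B : Set S), IsOpen A → IsOpen B → A ⊆ B → μ n A ≤ μ n B)
    (hμ_add : ∀ n (A B : Set S), IsOpen A → IsOpen B → Disjoint A B →
      μ n (A ∪ B) = μ n A + μ n B)
    (hμ_one : ∀ n, μ n Set.univ = 1)
    (hν_nonneg : ∀ n A, IsClopen A → 0 ≤ ν n A)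
    (hν_add : ∀ n (A B : Set S), IsClopen A → IsClopen B → Disjoint A B →
      ν n (A ∪ B) = ν n A + ν n B)
    (hsep : ∀ m n, ∀ ε > (0 : ℝ), ∃ A : Set S, IsClopen A ∧
      μ m A < ε ∧ ν n Aᶜ < ε) :
    ∃ Λ : Set ℕ, Λ.Infinite ∧ ∀ n, ∀ ε > (0 : ℝ), ∃ P : Set S, IsClopen P ∧
      ν n P < ε ∧ ∀ m ∈ Λ, μ m Pᶜ < ε :=
  stmt11_general hSCP μ ν hμ_nonneg hμ_add hμ_one hν_nonneg hν_add hsep
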